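/- arXiv:2006.07432 — 7 statements merged into one kernel-verified Lean document; each statement's English description precedes it below -/
import Mathlib

section
/- Let p be a prime number, k ≥ 1 a natural number, and m ≥ 1. Suppose b_1, …, b_m are natural numbers with b_1 + ⋯ + b_m = p^k such that no b_i equals p^k (equivalently, every b_i < p^k). Then p divides the multinomial coefficient p^k! / (b_1! · b_2! ⋯ b_m!). -/
namespace Nat

theorem choose_dvd_multinomial {α : Type*} {s : Finset α} {a : α} (f : α → ℕ) (ha : a ∈ s) :
    (∑ i ∈ s, f i).choose (f a) ∣ multinomial s f := by
  classical
  rw [← Finset.insert_erase ha, multinomial_insert (Finset.notMem_erase a s),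
    Finset.sum_insert (Finset.notMem_erase a s)]
  exact dvd_mul_right _ _

end Nat

theorem multinomial_prime_pow_dvd_general
    (p k m : ℕ) (hp : p.Prime)
    (b : Fin m → ℕ) (hsum : ∑ i, b i = p ^ k) (hlt : ∀ i, b i < p ^ k) :
    p ∣ Nat.multinomial Finset.univ b := by
  obtain ⟨i, -, hi⟩ : ∃ i ∈ Finset.univ, b i ≠ 0 :=
    Finset.exists_ne_zero_of_sum_ne_zero (hsum ▸ (pow_pos hp.pos k).ne')
  have hchoose : (p ^ k).choose (b i) ∣ Nat.multinomial Finset.univ b :=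
    hsum ▸ Nat.choose_dvd_multinomial b (Finset.mem_univ i)
  exact (hp.dvd_choose_pow hi (hlt i).ne).trans hchoose

/-- Let `p` be a prime, `k ≥ 1`, `m ≥ 1`, and `b_1, …, b_m` natural numbers with
`b_1 + ⋯ + b_m = p ^ k` such that every `b_i < p ^ k`.  Then `p` divides the
multinomial coefficient `(p ^ k)! / (b_1! ⋯ b_m!)`. -/
theorem multinomial_prime_pow_dvd
    (p k m : ℕ) (hp : p.Prime) (hk : 1 ≤ k) (hm : 1 ≤ m)
    (b : Fin m → ℕ) (hsum : ∑ i, b i = p ^ k) (hlt : ∀ i, b i < p ^ k) :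
    p ∣ Nat.multinomial Finset.univ b :=
  multinomial_prime_pow_dvd_general p k m hp b hsum hlt
end

section
/- Let K be a number field with ring of integers 𝓞. Let λ_1, …, λ_m ∈ 𝓞 and A_1, …, A_m ∈ ℤ, and define the sequence u_n = A_1·λ_1^n + ⋯ + A_m·λ_m^n. Suppose u_1 ≠ 0. Then for any prime p and any k ≥ 1, if u_{p^k} = 0 then p divides the ideal norm N(u_1·𝓞) of the principal ideal generated by u_1. -/
open NumberField

set_option maxHeartbeats 1000000
set_option synthInstance.maxHeartbeats 400000

theorem aux_norm_natCast (K : Type*) [Field K] [NumberField K] (p : ℕ) :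
    Algebra.norm ℤ ((p : RingOfIntegers K)) = (p : ℤ) ^ Module.finrank ℤ (RingOfIntegers K) := by
  have hb := Algebra.norm_algebraMap_of_basis (Module.Free.chooseBasis ℤ (RingOfIntegers K)) (p : ℤ)
  rw [Module.finrank_eq_card_chooseBasisIndex]
  have hcast : ((p : RingOfIntegers K)) = algebraMap ℤ (RingOfIntegers K) (p : ℤ) := by
    simp
  rw [hcast, hb]

theorem aux_not_unit (K : Type*) [Field K] [NumberField K] (p : ℕ) (hp : p.Prime) :
    (p : RingOfIntegers K) ∈ nonunits (RingOfIntegers K) := by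
  intro h
  have h2 := h.map (Algebra.norm ℤ)
  rw [aux_norm_natCast] at h2
  rw [Int.isUnit_iff] at h2
  have hd : 0 < Module.finrank ℤ (RingOfIntegers K) := by
    rw [RingOfIntegers.rank]; exact Module.finrank_pos
  have hgt : 1 < p ^ Module.finrank ℤ (RingOfIntegers K) :=
    Nat.one_lt_pow hd.ne' hp.one_lt
  rcases h2 with h2 | h2
  · have h3 : p ^ Module.finrank ℤ (RingOfIntegers K) = 1 := by exact_mod_cast h2
    omega
  · have : (0 : ℤ) ≤ (p : ℤ) ^ Module.finrank ℤ (RingOfIntegers K) := by positivity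
    omega

/-- Let `u n = A_1 λ_1 ^ n + ⋯ + A_m λ_m ^ n` with `A_i ∈ ℤ` and `λ_i ∈ 𝓞 K`,
and suppose `u 1 ≠ 0`.  Then for any prime `p` and `k ≥ 1`, if `u (p ^ k) = 0`
then `p` divides the ideal norm of the principal ideal generated by `u 1`. -/
theorem prime_dvd_norm_of_zero_at_prime_pow
    (K : Type*) [Field K] [NumberField K]
    (m : ℕ) (A : Fin m → ℤ) (lam : Fin m → RingOfIntegers K)
    (u : ℕ → RingOfIntegers K)
    (hu : ∀ n, u n = ∑ i, (A i : RingOfIntegers K) * (lam i) ^ n)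
    (h1 : u 1 ≠ 0)
    (p k : ℕ) (hp : p.Prime) (hk : 1 ≤ k) (hzero : u (p ^ k) = 0) :
    p ∣ Ideal.absNorm (Ideal.span {u 1}) := by
  haveI : Fact p.Prime := ⟨hp⟩
  set I : Ideal (RingOfIntegers K) := Ideal.span {(p : RingOfIntegers K)} with hI
  haveI : CharP (RingOfIntegers K ⧸ I) p := CharP.quotient _ p (aux_not_unit K p hp)
  set φ := Ideal.Quotient.mk I with hφ
  -- Frobenius step
  have key : φ (u 1) ^ (p ^ k) = 0 := by
    have h1' : φ (u 1) ^ (p ^ k) = iterateFrobenius _ p k (φ (u 1)) :=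
      (iterateFrobenius_def p k _).symm
    rw [h1', hu 1, map_sum, map_sum]
    have hterm : ∀ i : Fin m,
        iterateFrobenius _ p k (φ ((A i : RingOfIntegers K) * lam i ^ 1)) =
          φ ((A i : RingOfIntegers K) * lam i ^ (p ^ k)) := by
      intro i
      rw [map_mul, map_mul, map_mul, pow_one]
      congr 1
      · have : φ ((A i : RingOfIntegers K)) = ((A i : ℤ) : RingOfIntegers K ⧸ I) := by
          push_cast; rfl
        rw [this, map_intCast]
    rw [Finset.sum_congr rfl fun i _ => hterm i, ← map_sum, ← hu (p ^ k), hzero, map_zero]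
  -- deduce divisibility
  have hmem : (p : RingOfIntegers K) ∣ u 1 ^ (p ^ k) := by
    rw [← Ideal.mem_span_singleton, ← hI, ← Ideal.Quotient.eq_zero_iff_mem, map_pow]
    exact key
  have hnorm : (p : ℤ) ^ Module.finrank ℤ (RingOfIntegers K) ∣
      (Algebra.norm ℤ (u 1)) ^ (p ^ k) := by
    have := map_dvd (Algebra.norm ℤ (S := RingOfIntegers K)) hmem
    rwa [aux_norm_natCast, map_pow] at this
  have hd : 0 < Module.finrank ℤ (RingOfIntegers K) := by
    rw [RingOfIntegers.rank]; exact Module.finrank_pos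
  have hp' : Prime (p : ℤ) := Int.prime_iff_natAbs_prime.mpr (by simpa using hp)
  have h3 : (p : ℤ) ∣ Algebra.norm ℤ (u 1) := by
    have h4 : (p : ℤ) ∣ (Algebra.norm ℤ (u 1)) ^ (p ^ k) :=
      dvd_trans (dvd_pow_self _ hd.ne') hnorm
    exact hp'.dvd_of_dvd_pow h4
  rw [Ideal.absNorm_span_singleton]
  have := Int.natAbs_dvd_natAbs.mpr h3
  simpa using this
end

section
/- Let K be a number field with ring of integers 𝓞. Let λ_1, …, λ_m ∈ 𝓞 and A_1, …, A_m ∈ ℤ, define u_n = A_1·λ_1^n + ⋯ + A_m·λ_m^n, and suppose u_1 ≠ 0. Then for every fixed c ∈ ℕ, the set of primes p such that u_{p^k} = 0 for some k with 1 ≤ k ≤ c is finite. -/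
set_option synthInstance.maxHeartbeats 1000000
set_option maxHeartbeats 1000000


open NumberField

/-- Let `u n = A_1 λ_1 ^ n + ⋯ + A_m λ_m ^ n` with `A_i ∈ ℤ` and `λ_i ∈ 𝓞 K`,
and suppose `u 1 ≠ 0`.  Then for every fixed `c ∈ ℕ`, the set of primes `p` such
that `u (p ^ k) = 0` for some `1 ≤ k ≤ c` is finite. -/
theorem finite_primes_with_prime_pow_zero
    (K : Type*) [Field K] [NumberField K]
    (m : ℕ) (A : Fin m → ℤ) (lam : Fin m → RingOfIntegers K)
    (u : ℕ → RingOfIntegers K)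
    (hu : ∀ n, u n = ∑ i, (A i : RingOfIntegers K) * (lam i) ^ n)
    (h1 : u 1 ≠ 0) (c : ℕ) :
    {p : ℕ | p.Prime ∧ ∃ k, 1 ≤ k ∧ k ≤ c ∧ u (p ^ k) = 0}.Finite := by
  set N : ℤ := Algebra.norm ℤ (u 1) with hNdef
  have hN0 : N ≠ 0 := by
    rw [hNdef, Ne, Algebra.norm_eq_zero_iff]
    exact h1
  have hNnat : N.natAbs ≠ 0 := fun h => hN0 (Int.natAbs_eq_zero.mp h)
  apply Set.Finite.subset (Set.finite_Icc 0 N.natAbs)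
  rintro p ⟨hp, k, hk1, hkc, hzero⟩
  haveI : Fact p.Prime := ⟨hp⟩
  -- the basis of 𝓞 K over ℤ, used to compute the norm of p
  set b := RingOfIntegers.basis K with hb
  haveI : Nontrivial (𝓞 K) := inferInstance
  haveI hne : Nonempty (Module.Free.ChooseBasisIndex ℤ (𝓞 K)) := b.index_nonempty
  -- p is not a unit in 𝓞 K
  have hpnu : (p : 𝓞 K) ∈ nonunits (𝓞 K) := by
    intro hunit
    have := map_dvd (Algebra.norm ℤ) (isUnit_iff_dvd_one.mp hunit)
    rw [map_one] at this
    have hnormp : Algebra.norm ℤ ((p : ℤ) : 𝓞 K) =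
        (p : ℤ) ^ Fintype.card (Module.Free.ChooseBasisIndex ℤ (𝓞 K)) := by
      simpa using Algebra.norm_algebraMap_of_basis b (p : ℤ)
    rw [Int.cast_natCast] at hnormp
    rw [hnormp] at this
    have hcardpos : 0 < Fintype.card (Module.Free.ChooseBasisIndex ℤ (𝓞 K)) :=
      Fintype.card_pos
    have : (p : ℤ) ∣ 1 := dvd_trans (dvd_pow_self _ hcardpos.ne') this
    have := isUnit_of_dvd_one this
    rw [Int.isUnit_iff] at this
    have h2 := hp.two_le
    omega
  -- work in the quotient ring mod p
  set I := Ideal.span ({(p : 𝓞 K)} : Set (𝓞 K)) with hI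
  haveI : CharP (𝓞 K ⧸ I) p := CharP.quotient _ p hpnu
  set π := Ideal.Quotient.mk I with hπ
  have key : (π (u 1)) ^ p ^ k = 0 := by
    have h1eq : π (u 1) = ∑ i, (A i : 𝓞 K ⧸ I) * π (lam i) := by
      rw [hu 1]
      push_cast [map_sum, map_mul]
      simp
    have hpk : π (u (p ^ k)) = 0 := by rw [hzero, map_zero]
    rw [hu (p ^ k)] at hpk
    rw [h1eq, sum_pow_char_pow, ← hpk]
    rw [map_sum]
    refine Finset.sum_congr rfl fun i _ => ?_
    rw [mul_pow, map_mul, map_pow]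
    congr 1
    -- (A i : quotient) ^ p ^ k = (A i : quotient)
    have : ((A i : ℤ) : 𝓞 K ⧸ I) = (ZMod.castHom (dvd_refl p) (𝓞 K ⧸ I)) ((A i : ZMod p)) := by
      simp
    rw [map_intCast]
    rw [this, ← map_pow, ZMod.pow_card_pow]
  -- hence p divides (u 1) ^ (p ^ k) in 𝓞 K
  have hdvd : (p : 𝓞 K) ∣ (u 1) ^ p ^ k := by
    rw [← Ideal.mem_span_singleton, ← hI, ← Ideal.Quotient.eq_zero_iff_mem, map_pow]
    exact key
  -- take norms
  have hnormdvd := map_dvd (Algebra.norm ℤ) hdvd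
  rw [map_pow] at hnormdvd
  have hnormp : Algebra.norm ℤ ((p : 𝓞 K)) =
      (p : ℤ) ^ Fintype.card (Module.Free.ChooseBasisIndex ℤ (𝓞 K)) := by
    have := Algebra.norm_algebraMap_of_basis b (p : ℤ)
    simpa using this
  rw [hnormp, ← hNdef] at hnormdvd
  have hcardpos : 0 < Fintype.card (Module.Free.ChooseBasisIndex ℤ (𝓞 K)) := Fintype.card_pos
  have hpdvd : (p : ℤ) ∣ N ^ p ^ k :=
    dvd_trans (dvd_pow_self _ hcardpos.ne') hnormdvd
  have hprimeInt : Prime (p : ℤ) := Nat.prime_iff_prime_int.mp hp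
  have hpN : (p : ℤ) ∣ N := hprimeInt.dvd_of_dvd_pow hpdvd
  have : p ∣ N.natAbs := by simpa using Int.natAbs_dvd_natAbs.mpr hpN
  exact Set.mem_Icc.mpr ⟨Nat.zero_le _, Nat.le_of_dvd (Nat.pos_of_ne_zero hNnat) this⟩
end

section
/- Let K be a number field with ring of integers 𝓞. Let λ_1, …, λ_m ∈ 𝓞 and A_1, …, A_m ∈ ℤ[x]. Define u_n = A_1(n)·λ_1^n + ⋯ + A_m(n)·λ_m^n and v_n = A_1(0)·λ_1^n + ⋯ + A_m(0)·λ_m^n. Suppose ℓ ∈ ℕ satisfies v_ℓ ≠ 0. Then for any prime p and any k ≥ 1, if u_{ℓ·p^k} = 0 then p divides the ideal norm N(v_ℓ·𝓞). -/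
open NumberField

set_option maxHeartbeats 800000 in
set_option synthInstance.maxHeartbeats 400000 in
/-- Let `u n = A_1(n) λ_1 ^ n + ⋯ + A_m(n) λ_m ^ n` with `A_i ∈ ℤ[x]` and `λ_i ∈ 𝓞 K`,
and let `v n = A_1(0) λ_1 ^ n + ⋯ + A_m(0) λ_m ^ n` be the associated simple sequence.
Suppose `v ℓ ≠ 0`.  Then for any prime `p` and `k ≥ 1`, if `u (ℓ * p ^ k) = 0` then
`p` divides the ideal norm of the principal ideal generated by `v ℓ`. -/
theorem prime_dvd_norm_of_zero_poly_coeffs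
    (K : Type*) [Field K] [NumberField K]
    (m : ℕ) (A : Fin m → Polynomial ℤ) (lam : Fin m → RingOfIntegers K)
    (u v : ℕ → RingOfIntegers K)
    (hu : ∀ n, u n = ∑ i, (((A i).eval (n : ℤ) : ℤ) : RingOfIntegers K) * (lam i) ^ n)
    (hv : ∀ n, v n = ∑ i, (((A i).eval (0 : ℤ) : ℤ) : RingOfIntegers K) * (lam i) ^ n)
    (ℓ : ℕ) (hℓ : v ℓ ≠ 0)
    (p k : ℕ) (hp : p.Prime) (hk : 1 ≤ k) (hzero : u (ℓ * p ^ k) = 0) :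
    p ∣ Ideal.absNorm (Ideal.span {v ℓ}) := by
  classical
  haveI : Fact p.Prime := ⟨hp⟩
  set n := ℓ * p ^ k with hn
  set c := Module.finrank ℤ (RingOfIntegers K) with hc
  -- absNorm of span {p} is p ^ c
  have hcard : Fintype.card (Module.Free.ChooseBasisIndex ℤ (RingOfIntegers K)) = c := by
    rw [hc, Module.finrank_eq_card_basis (Module.Free.chooseBasis ℤ (RingOfIntegers K))]
  have hnormp : Ideal.absNorm (Ideal.span {(p : RingOfIntegers K)}) = p ^ c := by
    rw [Ideal.absNorm_span_singleton]
    have h1 : (p : RingOfIntegers K) = algebraMap ℤ (RingOfIntegers K) (p : ℤ) := by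
      push_cast; rfl
    rw [h1, Algebra.norm_algebraMap_of_basis (Module.Free.chooseBasis ℤ (RingOfIntegers K)), hcard]
    simp [Int.natAbs_pow]
  have hcpos : 0 < c := by
    rw [← hcard]
    exact Fintype.card_pos
  -- p is not a unit in 𝓞 K
  have hpnonunit : (p : RingOfIntegers K) ∈ nonunits (RingOfIntegers K) := by
    intro hunit
    have htop : Ideal.span {(p : RingOfIntegers K)} = ⊤ := Ideal.span_singleton_eq_top.mpr hunit
    rw [htop, Ideal.absNorm_top] at hnormp
    have h2 := hp.two_le
    have : 2 ≤ p ^ c := le_trans h2 (Nat.le_self_pow hcpos.ne' p)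
    omega
  set I := Ideal.span {(p : RingOfIntegers K)} with hI
  haveI hcharQ : CharP (RingOfIntegers K ⧸ I) p := CharP.quotient (RingOfIntegers K) p hpnonunit
  haveI : ExpChar (RingOfIntegers K ⧸ I) p := ExpChar.prime hp
  set f := Ideal.Quotient.mk I with hf
  set g := ZMod.castHom (dvd_refl p) (RingOfIntegers K ⧸ I) with hg
  -- p divides n
  have hpn : (p : ℤ) ∣ (n : ℤ) := by
    rw [hn]
    push_cast
    exact Dvd.dvd.mul_left (dvd_pow_self (p : ℤ) (by omega)) _
  have hnz : ((n : ℤ) : ZMod p) = 0 := (ZMod.intCast_zmod_eq_zero_iff_dvd _ _).mpr hpn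
  -- A i evaluated at n and 0 agree mod p
  have hAeq : ∀ i, (((A i).eval ((0 : ℤ)) : ℤ) : ZMod p) = (((A i).eval ((n : ℤ)) : ℤ) : ZMod p) := by
    intro i
    have hdvd : (p : ℤ) ∣ ((A i).eval ((n : ℤ)) - (A i).eval 0) :=
      dvd_trans (by simpa using hpn)
        (by simpa using Polynomial.sub_dvd_eval_sub ((n : ℕ) : ℤ) 0 (A i))
    have hzz := (ZMod.intCast_zmod_eq_zero_iff_dvd _ p).mpr hdvd
    push_cast at hzz
    rw [sub_eq_zero] at hzz
    exact hzz.symm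
  -- key: (f (v ℓ)) ^ p ^ k = 0
  have key : f (v ℓ) ^ p ^ k = 0 := by
    rw [hv, map_sum, sum_pow_char_pow]
    have heq : ∀ i : Fin m,
        (f ((((A i).eval (0 : ℤ) : ℤ) : RingOfIntegers K) * lam i ^ ℓ)) ^ p ^ k
          = f ((((A i).eval ((n : ℤ)) : ℤ) : RingOfIntegers K) * lam i ^ n) := by
      intro i
      rw [map_mul, map_mul, mul_pow, map_pow, map_pow, ← pow_mul, ← hn]
      congr 1
      rw [map_intCast, map_intCast]
      have l0 : ((((A i).eval (0 : ℤ) : ℤ)) : RingOfIntegers K ⧸ I)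
          = g (((A i).eval (0 : ℤ) : ℤ) : ZMod p) := (map_intCast g _).symm
      have l1 : ((((A i).eval ((n : ℤ)) : ℤ)) : RingOfIntegers K ⧸ I)
          = g (((A i).eval ((n : ℤ)) : ℤ) : ZMod p) := (map_intCast g _).symm
      rw [l0, l1, ← map_pow, ← ZMod.pow_card_pow (n := k) ((((A i).eval ((n : ℤ)) : ℤ)) : ZMod p),
        hAeq i]
    rw [Finset.sum_congr rfl (fun i _ => heq i), ← map_sum, ← hu, hzero, map_zero]
  -- conclude
  have hmem : v ℓ ^ p ^ k ∈ I := by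
    rwa [← map_pow, Ideal.Quotient.eq_zero_iff_mem] at key
  have hdvd1 : Ideal.absNorm I ∣ Ideal.absNorm (Ideal.span {v ℓ ^ p ^ k}) :=
    Ideal.absNorm_dvd_absNorm_of_le ((Ideal.span_singleton_le_iff_mem _).mpr hmem)
  rw [← Ideal.span_singleton_pow, map_pow, hI, hnormp] at hdvd1
  exact hp.dvd_of_dvd_pow (dvd_trans (dvd_pow_self p hcpos.ne') hdvd1)
end

section
/- Let K be a number field with ring of integers 𝓞. Let λ_1, …, λ_m ∈ 𝓞 and A_1, …, A_m ∈ ℤ[x]. Define u_n = A_1(n)·λ_1^n + ⋯ + A_m(n)·λ_m^n and v_n = A_1(0)·λ_1^n + ⋯ + A_m(0)·λ_m^n. Fix c ∈ ℕ and fix ℓ ≤ c with v_ℓ ≠ 0. Then the set of primes p such that u_{ℓ·p^k} = 0 for some k with 1 ≤ k ≤ c is finite. -/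
open NumberField

private lemma aux_cast_eq (K : Type*) [Field K] [NumberField K] (z : ℤ) :
    ((z : ℤ) : RingOfIntegers K) = algebraMap ℤ (RingOfIntegers K) z :=
  (eq_intCast (algebraMap ℤ (RingOfIntegers K)) z).symm

private lemma aux_norm_cast (K : Type*) [Field K] [NumberField K] (z : ℤ) :
    Algebra.norm ℤ ((z : ℤ) : RingOfIntegers K)
      = z ^ Module.finrank ℤ (RingOfIntegers K) := by
  rw [aux_cast_eq, Algebra.norm_algebraMap_of_basis
    (Module.Free.chooseBasis ℤ (RingOfIntegers K)),
    Module.finrank_eq_card_chooseBasisIndex]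

private lemma aux_int_dvd_of_dvd (K : Type*) [Field K] [NumberField K]
    {p : ℕ} (hp : p.Prime) {n : ℤ}
    (h : (p : RingOfIntegers K) ∣ (n : RingOfIntegers K)) : (p : ℤ) ∣ n := by
  have hd : 0 < Module.finrank ℤ (RingOfIntegers K) := by
    rw [RingOfIntegers.rank]
    exact Module.finrank_pos
  have hmap := map_dvd (Algebra.norm ℤ (S := RingOfIntegers K)) h
  rw [show ((p : ℕ) : RingOfIntegers K) = (((p : ℤ) : ℤ) : RingOfIntegers K) by push_cast; ring,
    aux_norm_cast, aux_norm_cast] at hmap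
  have hpZ : Prime (p : ℤ) := Nat.prime_iff_prime_int.mp hp
  exact hpZ.dvd_of_dvd_pow (dvd_trans (dvd_pow_self _ hd.ne') hmap)

set_option maxHeartbeats 1000000 in
set_option synthInstance.maxHeartbeats 1000000 in
/-- Let `u n = A_1(n) λ_1 ^ n + ⋯ + A_m(n) λ_m ^ n` with `A_i ∈ ℤ[x]` and `λ_i ∈ 𝓞 K`,
and let `v n = A_1(0) λ_1 ^ n + ⋯ + A_m(0) λ_m ^ n` be the associated simple sequence.
Fix `c ∈ ℕ` and `ℓ ≤ c` with `v ℓ ≠ 0`.  Then the set of primes `p` such that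
`u (ℓ * p ^ k) = 0` for some `1 ≤ k ≤ c` is finite. -/
theorem finite_primes_with_zero_poly_coeffs
    (K : Type*) [Field K] [NumberField K]
    (m : ℕ) (A : Fin m → Polynomial ℤ) (lam : Fin m → RingOfIntegers K)
    (u v : ℕ → RingOfIntegers K)
    (hu : ∀ n, u n = ∑ i, (((A i).eval (n : ℤ) : ℤ) : RingOfIntegers K) * (lam i) ^ n)
    (hv : ∀ n, v n = ∑ i, (((A i).eval (0 : ℤ) : ℤ) : RingOfIntegers K) * (lam i) ^ n)
    (c ℓ : ℕ) (hℓc : ℓ ≤ c) (hℓ : v ℓ ≠ 0) :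
    {p : ℕ | p.Prime ∧ ∃ k, 1 ≤ k ∧ k ≤ c ∧ u (ℓ * p ^ k) = 0}.Finite := by
  classical
  set N : ℤ := Algebra.norm ℤ (v ℓ) with hN
  have hN0 : N ≠ 0 := fun h0 => hℓ (Algebra.norm_eq_zero_iff.mp h0)
  apply Set.Finite.subset (Set.finite_Icc 0 N.natAbs)
  rintro p ⟨hpp, k, hk1, hkc, hu0⟩
  haveI : Fact p.Prime := ⟨hpp⟩
  -- Key: (p : 𝓞 K) ∣ (v ℓ) ^ (p ^ k)
  have key : (p : RingOfIntegers K) ∣ (v ℓ) ^ (p ^ k) := by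
    set I : Ideal (RingOfIntegers K) := Ideal.span {(p : RingOfIntegers K)} with hI
    have hdvd_iff : ∀ z : RingOfIntegers K,
        Ideal.Quotient.mk I z = 0 ↔ (p : RingOfIntegers K) ∣ z := by
      intro z
      rw [Ideal.Quotient.eq_zero_iff_mem, hI, Ideal.mem_span_singleton]
    haveI : CharP (RingOfIntegers K ⧸ I) p := by
      refine ⟨fun a => ?_⟩
      have hcast : ((a : ℕ) : RingOfIntegers K ⧸ I)
          = Ideal.Quotient.mk I ((a : ℕ) : RingOfIntegers K) :=
        (map_natCast (Ideal.Quotient.mk I) a).symm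
      rw [hcast, hdvd_iff]
      constructor
      · intro h
        have := aux_int_dvd_of_dvd K hpp (n := (a : ℤ)) (by exact_mod_cast h)
        exact_mod_cast this
      · rintro ⟨b, rfl⟩
        exact ⟨(b : RingOfIntegers K), by push_cast; ring⟩
    set φ := Ideal.Quotient.mk I with hφ
    -- integer casts are fixed by the `p^k`-th power map in the quotient
    have hfix : ∀ a : ℤ, (a : RingOfIntegers K ⧸ I) ^ (p ^ k) = (a : RingOfIntegers K ⧸ I) := by
      intro a
      have hz : (p : ℤ) ∣ a ^ (p ^ k) - a := by
        have : ((a ^ (p ^ k) - a : ℤ) : ZMod p) = 0 := by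
          push_cast
          rw [ZMod.pow_card_pow]
          ring
        exact_mod_cast (ZMod.intCast_zmod_eq_zero_iff_dvd _ p).mp this
      have h0 := (CharP.intCast_eq_zero_iff (RingOfIntegers K ⧸ I) p (a ^ (p ^ k) - a)).mpr hz
      push_cast at h0
      exact sub_eq_zero.mp h0
    have h1 : φ (u (ℓ * p ^ k)) =
        ∑ i, (((A i).eval (0 : ℤ) : ℤ) : RingOfIntegers K ⧸ I) * (φ (lam i)) ^ (ℓ * p ^ k) := by
      rw [hu, map_sum]
      refine Finset.sum_congr rfl fun i _ => ?_
      rw [map_mul, map_pow, map_intCast]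
      congr 1
      have hpk : (p : ℤ) ∣ ((ℓ * p ^ k : ℕ) : ℤ) := by
        push_cast
        exact dvd_mul_of_dvd_right (dvd_pow_self _ (by omega)) _
      have hdvd : (p : ℤ) ∣ (A i).eval ((ℓ * p ^ k : ℕ) : ℤ) - (A i).eval 0 := by
        refine dvd_trans hpk ?_
        have h2 := Polynomial.sub_dvd_eval_sub ((ℓ * p ^ k : ℕ) : ℤ) 0 (A i)
        simpa using h2
      have h3 := (CharP.intCast_eq_zero_iff (RingOfIntegers K ⧸ I) p _).mpr hdvd
      rw [Int.cast_sub] at h3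
      exact sub_eq_zero.mp h3
    have h2 : φ (v ℓ) ^ (p ^ k) =
        ∑ i, (((A i).eval (0 : ℤ) : ℤ) : RingOfIntegers K ⧸ I) * (φ (lam i)) ^ (ℓ * p ^ k) := by
      rw [hv, map_sum, sum_pow_char_pow]
      refine Finset.sum_congr rfl fun i _ => ?_
      rw [map_mul, map_pow, map_intCast, mul_pow, ← pow_mul, hfix, mul_comm ℓ (p ^ k),
        pow_mul, ← pow_mul, mul_comm (p ^ k) ℓ]
    have hzero : φ ((v ℓ) ^ (p ^ k)) = 0 := by
      rw [map_pow, h2, ← h1, hu0, map_zero]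
    exact (hdvd_iff _).mp hzero
  -- take norms
  have hnorm := map_dvd (Algebra.norm ℤ (S := RingOfIntegers K)) key
  rw [map_pow, show ((p : ℕ) : RingOfIntegers K) = (((p : ℤ) : ℤ) : RingOfIntegers K)
    by push_cast; ring, aux_norm_cast, ← hN] at hnorm
  have hd : 0 < Module.finrank ℤ (RingOfIntegers K) := by
    rw [RingOfIntegers.rank]; exact Module.finrank_pos
  have hpZ : Prime (p : ℤ) := Nat.prime_iff_prime_int.mp hpp
  have hpN : (p : ℤ) ∣ N :=
    hpZ.dvd_of_dvd_pow (dvd_trans (dvd_pow_self _ hd.ne') hnorm)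
  refine ⟨Nat.zero_le _, ?_⟩
  have hdvdN : p ∣ N.natAbs := by
    have := Int.natAbs_dvd_natAbs.mpr hpN
    simpa using this
  exact Nat.le_of_dvd (Int.natAbs_pos.mpr hN0) hdvdN
end

section
/- Let p_1, …, p_m be the first m prime numbers and let a_1, …, a_m, b ∈ ℤ. For each k define the periodic selector sequence s_k(n) = 1 if p_k divides n and s_k(n) = 0 otherwise, and define t(n) = b − ∑_{k=1}^m a_k·s_k(n). Then there exists N ∈ ℕ such that t(N) = 0 if and only if there exists a subset S ⊆ {1, …, m} with ∑_{k∈S} a_k = b. -/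
/-- Let `p_1, …, p_m` be the first `m` primes (`Nat.nth Nat.Prime k` for `k < m`), and
`a_1, …, a_m, b ∈ ℤ`.  Define selectors `s_k(n) = 1` if `p_k ∣ n` and `0` otherwise, and
`t(n) = b - ∑ k, a_k * s_k(n)`.  Then `t(N) = 0` for some `N ∈ ℕ` if and only if some
subset `S ⊆ {1, …, m}` satisfies `∑_{k ∈ S} a_k = b`. -/
theorem skolem_subset_sum_reduction
    (m : ℕ) (a : Fin m → ℤ) (b : ℤ)
    (s : Fin m → ℕ → ℤ)
    (hs : ∀ k n, s k n = if Nat.nth Nat.Prime k ∣ n then 1 else 0)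
    (t : ℕ → ℤ)
    (ht : ∀ n, t n = b - ∑ k, a k * s k n) :
    (∃ N : ℕ, t N = 0) ↔ ∃ S : Finset (Fin m), ∑ k ∈ S, a k = b := by
  have hprime : ∀ k : Fin m, (Nat.nth Nat.Prime k).Prime := fun k =>
    Nat.prime_nth_prime k
  have hinj : Function.Injective (Nat.nth Nat.Prime) :=
    (Nat.nth_strictMono Nat.infinite_setOf_prime).injective
  have key : ∀ N : ℕ, t N = 0 ↔
      ∑ k ∈ Finset.univ.filter (fun k : Fin m => Nat.nth Nat.Prime k ∣ N), a k = b := by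
    intro N
    rw [ht N, sub_eq_zero, Finset.sum_filter]
    have heq : ∀ k : Fin m, a k * s k N = if Nat.nth Nat.Prime k ∣ N then a k else 0 := by
      intro k; rw [hs]; split <;> simp
    rw [Finset.sum_congr rfl fun k _ => heq k]
    exact eq_comm
  constructor
  · rintro ⟨N, hN⟩
    exact ⟨_, (key N).mp hN⟩
  · rintro ⟨S, hS⟩
    refine ⟨∏ k ∈ S, Nat.nth Nat.Prime k, (key _).mpr ?_⟩
    have hfil : Finset.univ.filter
        (fun k : Fin m => Nat.nth Nat.Prime k ∣ ∏ j ∈ S, Nat.nth Nat.Prime j) = S := by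
      ext k
      simp only [Finset.mem_filter, Finset.mem_univ, true_and]
      constructor
      · intro hdvd
        obtain ⟨j, hj, hdj⟩ := (Nat.Prime.prime (hprime k)).exists_mem_finset_dvd hdvd
        have : Nat.nth Nat.Prime k = Nat.nth Nat.Prime j :=
          ((Nat.prime_dvd_prime_iff_eq (hprime k) (hprime j)).mp hdj)
        have : k = j := Fin.val_injective (hinj this)
        rwa [this]
      · intro hk
        exact Finset.dvd_prod_of_mem _ hk
    rw [hfil, hS]
end

section
/- Let p_1, …, p_m be the first m odd prime numbers and let a_1, …, a_m, b ∈ ℤ. For each k define the periodic selector sequence σ_k(n) = 1 if n ≡ 1 (mod p_k) and σ_k(n) = 0 otherwise, and define τ(n) = b − ∑_{k=1}^m a_k·σ_k(n). Then there exists an odd prime p with τ(p) = 0 if and only if there exists a subset S ⊆ {1, …, m} with ∑_{k∈S} a_k = b. -/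
/-!
Every term `a k * σ k n` is `a k` or `0`, so `τ n = b - ∑_{k ∈ S(n)} a k` with
`S(n) = {k | n ≡ 1 (mod p_k)}`; hence a zero of `τ` yields a subset sum. Conversely, given `S`,
the Chinese remainder theorem produces a unit residue modulo `∏ p_k` that is `1` modulo `p_k`
for `k ∈ S` and `2` modulo the other `p_k`, and Dirichlet's theorem provides an odd prime in
that residue class, for which `S(p) = S`.
-/

open Finset Function

theorem exists_prime_gt_forall_natCast_eq {ι : Type*} [Fintype ι] {n : ι → ℕ}
    (hn : ∀ i, n i ≠ 0) (hcop : Pairwise (Nat.Coprime on n)) {r : ∀ i, ZMod (n i)}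
    (hr : ∀ i, IsUnit (r i)) (B : ℕ) :
    ∃ p, p.Prime ∧ B < p ∧ ∀ i, (p : ZMod (n i)) = r i := by
  let e := ZMod.prodEquivPi n hcop
  have : NeZero (∏ i, n i) := ⟨prod_ne_zero_iff.mpr fun i _ => hn i⟩
  obtain ⟨p, ⟨hp, hpr⟩, hBp⟩ := (Nat.infinite_setOfPred_prime_and_eq_mod
    ((Pi.isUnit_iff.mpr hr).map e.symm)).exists_gt B
  refine ⟨p, hp, hBp, fun i => ?_⟩
  have hpe := congrFun (congrArg e hpr) i
  rwa [map_natCast, RingEquiv.apply_symm_apply] at hpe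

theorem exists_prime_gt_two_forall_mod_eq_one_iff_mem {ι : Type*} [Fintype ι] [DecidableEq ι]
    {q : ι → ℕ} (hq : ∀ i, (q i).Prime) (hq2 : ∀ i, q i ≠ 2) (hinj : Injective q)
    (S : Finset ι) : ∃ p, p.Prime ∧ 2 < p ∧ ∀ i, p % q i = 1 ↔ i ∈ S := by
  have hunit : ∀ i, IsUnit ((if i ∈ S then 1 else 2 : ℕ) : ZMod (q i)) := by
    intro i
    rw [ZMod.isUnit_iff_coprime]
    split_ifs
    · exact Nat.coprime_one_left _
    · exact (Nat.coprime_primes Nat.prime_two (hq i)).mpr (hq2 i).symm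
  obtain ⟨p, hp, h2p, hpr⟩ := exists_prime_gt_forall_natCast_eq (fun i => (hq i).ne_zero)
    (fun i j hij => (Nat.coprime_primes (hq i) (hq j)).mpr (hinj.ne hij)) hunit 2
  refine ⟨p, hp, h2p, fun i => ?_⟩
  have hmod := (ZMod.natCast_eq_natCast_iff' _ _ _).mp (hpr i)
  have h3 : 3 ≤ q i := by have := (hq i).two_le; have := hq2 i; omega
  split_ifs at hmod with hi
  · simp [hi, hmod, Nat.mod_eq_of_lt (show 1 < q i by omega)]
  · simp [hi, hmod, Nat.mod_eq_of_lt (show 2 < q i by omega)]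

/-- Let `p_1, …, p_m` be the first `m` odd primes (`Nat.nth Nat.Prime (k+1)` for `k < m`),
and `a_1, …, a_m, b ∈ ℤ`.  Define selectors `σ_k(n) = 1` if `n ≡ 1 (mod p_k)` and `0`
otherwise, and `τ(n) = b - ∑ k, a_k * σ_k(n)`.  Then there exists an odd prime `p` with
`τ(p) = 0` if and only if some subset `S ⊆ {1, …, m}` satisfies `∑_{k ∈ S} a_k = b`. -/
theorem skolem_prime_subset_sum_reduction
    (m : ℕ) (a : Fin m → ℤ) (b : ℤ)
    (σ : Fin m → ℕ → ℤ)
    (hσ : ∀ k n, σ k n = if n % Nat.nth Nat.Prime (k + 1) = 1 then 1 else 0)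
    (τ : ℕ → ℤ)
    (hτ : ∀ n, τ n = b - ∑ k, a k * σ k n) :
    (∃ p : ℕ, p.Prime ∧ Odd p ∧ τ p = 0) ↔ ∃ S : Finset (Fin m), ∑ k ∈ S, a k = b := by
  let q : Fin m → ℕ := fun k => Nat.nth Nat.Prime (k + 1)
  have hτS : ∀ n, τ n = b - ∑ k ∈ univ.filter (fun k => n % q k = 1), a k := by
    intro n
    simp [hτ, hσ, sum_filter, q]
  constructor
  · rintro ⟨p, -, -, hp⟩
    exact ⟨_, by linarith [hτS p]⟩
  · rintro ⟨S, hS⟩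
    have hq2 : ∀ k, q k ≠ 2 := fun k => by have := Nat.add_two_le_nth_prime (k + 1); simp only [q]; omega
    have hinj : Injective q := fun i j h =>
      Fin.ext (by simpa using Nat.nth_injective Nat.infinite_setOfPred_prime h)
    obtain ⟨p, hp, h2p, hpS⟩ := exists_prime_gt_two_forall_mod_eq_one_iff_mem
      (fun k => Nat.prime_nth_prime _) hq2 hinj S
    have hfilter : univ.filter (fun k => p % q k = 1) = S := by ext k; simpa using hpS k
    exact ⟨p, hp, hp.odd_of_ne_two h2p.ne', by rw [hτS, hfilter, hS, sub_self]⟩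
end
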